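/- arXiv:2105.04016 — 3 statements merged into one kernel-verified Lean document; each statement's English description precedes it below -/
import Mathlib

section
/- Let f(x) = ⟨Ax, x⟩ + ⟨a, x⟩ + α and g(x) = ⟨Bx, x⟩ + ⟨b, x⟩ + β be second degree polynomials on R^n with A, B self-adjoint, and let Z be a standard normal random vector in R^n. Then (E[|∇f(Z) − ∇g(Z)|^2])^{1/2} ≤ √2 · (E[|f(Z) − g(Z)|^2])^{1/2}. -/
/-!
Put `q = f - g = ⟨Cz, z⟩ + ⟨c, z⟩ + d` with `C = A - B` symmetric, so that `∇q(z) = 2Cz + c`.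
For a standard Gaussian `Z`,
`E q(Z)² = (tr C + d)² + 2‖C‖²_F + ‖c‖²` and `E |∇q(Z)|² = 4‖C‖²_F + ‖c‖²`,
and the second quantity is at most twice the first.

The formula for `E q(Z)²` is proved by induction on the dimension: integrating out the first
coordinate `x` only needs the one-dimensional moments `E x^k`, `k ≤ 4`, which come from Stein's
identity `E[x h(x)] = E[h'(x)]`, and leaves squares of quadratic polynomials in the remaining
coordinates.
-/

open MeasureTheory ProbabilityTheory Real
open scoped NNReal

lemma gaussianPDFReal_zero_one :
    gaussianPDFReal 0 1 = fun x ↦ (√(2 * π))⁻¹ * rexp (-x ^ 2 / 2) := by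
  ext x
  simp [gaussianPDFReal]

lemma hasDerivAt_gaussianPDFReal_zero_one (x : ℝ) :
    HasDerivAt (gaussianPDFReal 0 1) (-x * gaussianPDFReal 0 1 x) x := by
  have hexp : HasDerivAt (fun y : ℝ ↦ -y ^ 2 / 2) (-x) x := by
    simpa using ((hasDerivAt_pow 2 x).neg.div_const 2).congr_deriv (by ring)
  rw [gaussianPDFReal_zero_one]
  exact (hexp.exp.const_mul _).congr_deriv (by ring)

lemma integrable_gaussianReal_zero_one_iff {f : ℝ → ℝ} :
    Integrable f (gaussianReal 0 1) ↔ Integrable (fun x ↦ f x * gaussianPDFReal 0 1 x) := by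
  rw [gaussianReal_of_var_ne_zero 0 one_ne_zero,
    integrable_withDensity_iff_integrable_smul' (measurable_gaussianPDF 0 1)
      (ae_of_all _ fun _ ↦ gaussianPDF_lt_top)]
  simp [toReal_gaussianPDF, mul_comm]

theorem integral_mul_gaussianReal_eq_integral_deriv {f f' : ℝ → ℝ}
    (hf : ∀ x, HasDerivAt f (f' x) x) (hf_int : Integrable f (gaussianReal 0 1))
    (hf'_int : Integrable f' (gaussianReal 0 1))
    (hxf_int : Integrable (fun x ↦ x * f x) (gaussianReal 0 1)) :
    ∫ x, x * f x ∂gaussianReal 0 1 = ∫ x, f' x ∂gaussianReal 0 1 := by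
  rw [integrable_gaussianReal_zero_one_iff] at hf_int hf'_int hxf_int
  simp only [integral_gaussianReal_eq_integral_smul one_ne_zero, smul_eq_mul]
  have hibp := integral_mul_deriv_eq_deriv_mul_of_integrable (fun x _ ↦ hf x)
    (fun x _ ↦ hasDerivAt_gaussianPDFReal_zero_one x)
    (hxf_int.neg.congr (ae_of_all _ fun x ↦ by simp only [Pi.neg_apply, Pi.mul_apply]; ring))
    hf'_int hf_int
  simp only [neg_mul, mul_neg, integral_neg, neg_inj] at hibp
  convert hibp using 1 <;> congr 1 <;> ext x <;> ring

lemma integrable_pow_gaussianReal {m : ℝ} {v : ℝ≥0} (k : ℕ) :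
    Integrable (fun x : ℝ ↦ x ^ k) (gaussianReal m v) :=
  integrable_pow_of_mem_interior_integrableExpSet (X := id) (by simp) k

lemma integral_pow_add_two_gaussianReal (k : ℕ) :
    ∫ x, x ^ (k + 2) ∂gaussianReal 0 1 = (k + 1) * ∫ x, x ^ k ∂gaussianReal 0 1 := by
  have hstein := integral_mul_gaussianReal_eq_integral_deriv (fun x ↦ hasDerivAt_pow (k + 1) x)
    (integrable_pow_gaussianReal _) ((integrable_pow_gaussianReal k).const_mul _)
    (by simpa only [← pow_succ'] using integrable_pow_gaussianReal (k + 2))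
  simpa only [← pow_succ', integral_const_mul, Nat.add_sub_cancel, Nat.cast_succ] using hstein

lemma integral_sq_quadratic_gaussianReal (a b c : ℝ) :
    ∫ x, (a * x ^ 2 + b * x + c) ^ 2 ∂gaussianReal 0 1 = (a + c) ^ 2 + 2 * a ^ 2 + b ^ 2 := by
  have h1 : ∫ x, x ∂gaussianReal 0 1 = 0 := integral_id_gaussianReal
  have h2 : ∫ x, x ^ 2 ∂gaussianReal 0 1 = 1 := by
    simpa using integral_pow_add_two_gaussianReal 0
  have h3 : ∫ x, x ^ 3 ∂gaussianReal 0 1 = 0 := by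
    simpa [h1] using integral_pow_add_two_gaussianReal 1
  have h4 : ∫ x, x ^ 4 ∂gaussianReal 0 1 = 3 := by
    norm_num [integral_pow_add_two_gaussianReal 2, h2]
  have hexp (x : ℝ) : (a * x ^ 2 + b * x + c) ^ 2 =
      ∑ k : Fin 5, ![c ^ 2, 2 * b * c, b ^ 2 + 2 * a * c, 2 * a * b, a ^ 2] k * x ^ (k : ℕ) := by
    simp only [Fin.sum_univ_five, Matrix.cons_val, Fin.coe_ofNat_eq_mod, Nat.reduceMod]
    ring
  simp_rw [hexp]
  rw [integral_finsetSum _ fun (k : Fin 5) _ ↦ (integrable_pow_gaussianReal (k : ℕ)).const_mul _]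
  simp only [Fin.sum_univ_five, Matrix.cons_val, Fin.coe_ofNat_eq_mod, Nat.reduceMod,
    integral_const_mul, pow_zero, pow_one, integral_const, probReal_univ, smul_eq_mul, h1, h2, h3, h4]
  ring

section QuadPoly

variable {ι : Type*} [Fintype ι]

def quadPoly (C : Matrix ι ι ℝ) (c : ι → ℝ) (d : ℝ) (z : ι → ℝ) : ℝ :=
  ∑ i, ∑ j, C i j * z i * z j + ∑ i, c i * z i + d

variable {m : ℝ} {v : ℝ≥0}

lemma memLp_eval_pi_gaussianReal (i : ι) (p : ℝ≥0) :
    MemLp (fun z : ι → ℝ ↦ z i) p (Measure.pi fun _ ↦ gaussianReal m v) :=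
  (memLp_id_gaussianReal p).comp_measurePreserving (measurePreserving_eval _ i)

lemma memLp_quadPoly (C : Matrix ι ι ℝ) (c : ι → ℝ) (d : ℝ) :
    MemLp (quadPoly C c d) 2 (Measure.pi fun _ : ι ↦ gaussianReal m v) := by
  have : ENNReal.HolderTriple 4 4 2 := ⟨by
    rw [← ENNReal.add_halves 2⁻¹, ENNReal.div_eq_inv_mul, ← ENNReal.mul_inv (by simp) (by simp)]
    norm_num⟩
  have h4 (i : ι) : MemLp (fun z : ι → ℝ ↦ z i) 4 (Measure.pi fun _ ↦ gaussianReal m v) := by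
    exact_mod_cast memLp_eval_pi_gaussianReal i 4
  have h2 (i : ι) : MemLp (fun z : ι → ℝ ↦ z i) 2 (Measure.pi fun _ ↦ gaussianReal m v) := by
    exact_mod_cast memLp_eval_pi_gaussianReal i 2
  have hquad := memLp_finsetSum Finset.univ fun i _ ↦ memLp_finsetSum Finset.univ fun j _ ↦
    ((h4 j).mul' (h4 i) : MemLp _ 2 _).const_mul (C i j)
  have hlin := memLp_finsetSum Finset.univ fun i _ ↦ (h2 i).const_mul (c i)
  convert (hquad.add hlin).add (memLp_const d) using 1
  ext z
  simp [quadPoly, mul_assoc]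

lemma integrable_sq_quadPoly (C : Matrix ι ι ℝ) (c : ι → ℝ) (d : ℝ) :
    Integrable (fun z ↦ quadPoly C c d z ^ 2) (Measure.pi fun _ : ι ↦ gaussianReal m v) :=
  (memLp_quadPoly C c d).integrable_sq

end QuadPoly

theorem integral_pi_fin_succ {α E : Type*} [MeasurableSpace α] [NormedAddCommGroup E]
    [NormedSpace ℝ E] {n : ℕ} (μ : Measure α) [SigmaFinite μ] {f : (Fin (n + 1) → α) → E}
    (hf : Integrable f (Measure.pi fun _ ↦ μ)) :
    ∫ z, f z ∂(Measure.pi fun _ ↦ μ) = ∫ y, ∫ x, f (Fin.cons x y) ∂μ ∂(Measure.pi fun _ ↦ μ) := by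
  have hmp := (measurePreserving_piFinSuccAbove (fun _ : Fin (n + 1) ↦ μ) 0).symm
  rw [← hmp.integral_comp', integral_prod_symm]
  · simp [MeasurableEquiv.piFinSuccAbove_symm_apply, Fin.insertNthEquiv, Fin.insertNth_zero']
  · exact hmp.integrable_comp_emb (MeasurableEquiv.measurableEmbedding _) |>.mpr hf

lemma quadPoly_cons {n : ℕ} (C : Matrix (Fin (n + 1)) (Fin (n + 1)) ℝ) (c : Fin (n + 1) → ℝ)
    (d x : ℝ) (y : Fin n → ℝ) :
    quadPoly C c d (Fin.cons x y) =
      C 0 0 * x ^ 2 + quadPoly 0 (fun j ↦ C 0 j.succ + C j.succ 0) (c 0) y * x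
        + quadPoly (C.submatrix Fin.succ Fin.succ) (Fin.tail c) d y := by
  simp only [quadPoly, Fin.sum_univ_succ, Fin.cons_zero, Fin.cons_succ, Matrix.zero_apply,
    zero_mul, Finset.sum_const_zero, zero_add, Finset.sum_add_distrib, Matrix.submatrix_apply,
    Fin.tail, add_mul, Finset.sum_mul]
  ring_nf

theorem integral_sq_quadPoly {n : ℕ} (C : Matrix (Fin n) (Fin n) ℝ) (c : Fin n → ℝ) (d : ℝ) :
    ∫ z, quadPoly C c d z ^ 2 ∂(Measure.pi fun _ ↦ gaussianReal 0 1) =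
      (C.trace + d) ^ 2 + ∑ i, ∑ j, C i j * (C i j + C j i) + ∑ i, c i ^ 2 := by
  induction n generalizing d with
  | zero => simp [quadPoly, Matrix.trace]
  | succ n ih =>
    have hshift (y : Fin n → ℝ) :
        C 0 0 + quadPoly (C.submatrix Fin.succ Fin.succ) (Fin.tail c) d y =
          quadPoly (C.submatrix Fin.succ Fin.succ) (Fin.tail c) (d + C 0 0) y := by
      simp only [quadPoly]
      ring
    have hq := integrable_sq_quadPoly (m := 0) (v := 1) (C.submatrix Fin.succ Fin.succ)
      (Fin.tail c) (d + C 0 0)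
    have hr := integrable_sq_quadPoly (m := 0) (v := 1) (0 : Matrix (Fin n) (Fin n) ℝ)
      (fun j ↦ C 0 j.succ + C j.succ 0) (c 0)
    have hcross : ∑ i : Fin n, (C 0 i.succ + C i.succ 0) ^ 2 =
        ∑ i : Fin n, C 0 i.succ * (C 0 i.succ + C i.succ 0)
          + ∑ i : Fin n, C i.succ 0 * (C i.succ 0 + C 0 i.succ) := by
      rw [← Finset.sum_add_distrib]
      exact Finset.sum_congr rfl fun i _ ↦ by ring
    rw [integral_pi_fin_succ _ (integrable_sq_quadPoly C c d)]
    simp only [quadPoly_cons, integral_sq_quadratic_gaussianReal, hshift]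
    rw [integral_add (hq.fun_add (integrable_const _)) hr, integral_add hq (integrable_const _),
      integral_const, ih, ih]
    simp only [Matrix.trace, Fin.sum_univ_succ, Fin.tail, Matrix.diag_apply,
      Matrix.submatrix_apply, Finset.sum_add_distrib, probReal_univ, smul_eq_mul,
      Matrix.zero_apply, add_zero, mul_zero, Finset.sum_const_zero]
    linear_combination hcross

theorem integral_sum_sq_gradient_quadPoly_le {n : ℕ} {C : Matrix (Fin n) (Fin n) ℝ}
    (hC : C.IsSymm) (c : Fin n → ℝ) (d : ℝ) :
    ∫ z, ∑ i, (2 * ∑ j, C i j * z j + c i) ^ 2 ∂(Measure.pi fun _ ↦ gaussianReal 0 1) ≤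
      2 * ∫ z, quadPoly C c d z ^ 2 ∂(Measure.pi fun _ ↦ gaussianReal 0 1) := by
  have hgrad (z : Fin n → ℝ) (i : Fin n) :
      2 * ∑ j, C i j * z j + c i = quadPoly 0 (fun j ↦ 2 * C i j) (c i) z := by
    simp [quadPoly, Finset.mul_sum, mul_assoc]
  have hfrob : ∑ i, ∑ j, (2 * C i j) ^ 2 = 2 * ∑ i, ∑ j, C i j * (C i j + C j i) := by
    simp only [hC.apply, Finset.mul_sum]
    exact Finset.sum_congr rfl fun i _ ↦ Finset.sum_congr rfl fun j _ ↦ by ring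
  simp only [hgrad]
  rw [integral_finsetSum _ fun i _ ↦ integrable_sq_quadPoly _ _ _]
  simp only [integral_sq_quadPoly, Matrix.trace_zero, Matrix.zero_apply, add_zero, mul_zero,
    Finset.sum_const_zero, zero_add, Finset.sum_add_distrib, hfrob]
  nlinarith [sq_nonneg (C.trace + d), Finset.sum_nonneg fun i (_ : i ∈ Finset.univ) ↦ sq_nonneg (c i)]

/-- For second degree polynomials `f(x)=⟨Ax,x⟩+⟨a,x⟩+α` and
`g(x)=⟨Bx,x⟩+⟨b,x⟩+β` with `A`, `B` self-adjoint, and `Z` standard normal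
in `ℝⁿ`, `‖∇f(Z) − ∇g(Z)‖₂ ≤ √2 ‖f(Z) − g(Z)‖₂`. -/
theorem gradient_L2_bound (n : ℕ) (A B : Matrix (Fin n) (Fin n) ℝ)
    (hA : A.IsSymm) (hB : B.IsSymm) (a b : Fin n → ℝ) (α β : ℝ) :
    Real.sqrt (∫ z, (∑ i, ((2 * ∑ j, A i j * z j) + a i
          - ((2 * ∑ j, B i j * z j) + b i)) ^ 2)
        ∂(Measure.pi fun _ : Fin n => gaussianReal 0 1))
      ≤ Real.sqrt 2 *
        Real.sqrt (∫ z, (((∑ i, ∑ j, A i j * z i * z j) + (∑ i, a i * z i) + α)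
            - ((∑ i, ∑ j, B i j * z i * z j) + (∑ i, b i * z i) + β)) ^ 2
          ∂(Measure.pi fun _ : Fin n => gaussianReal 0 1)) := by
  have hgrad (z : Fin n → ℝ) (i : Fin n) :
      (2 * ∑ j, A i j * z j) + a i - ((2 * ∑ j, B i j * z j) + b i) =
        2 * ∑ j, (A - B) i j * z j + (a - b) i := by
    simp only [Matrix.sub_apply, Pi.sub_apply, sub_mul, Finset.sum_sub_distrib]
    ring
  have hdiff (z : Fin n → ℝ) :
      ((∑ i, ∑ j, A i j * z i * z j) + (∑ i, a i * z i) + α)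
        - ((∑ i, ∑ j, B i j * z i * z j) + (∑ i, b i * z i) + β) =
        quadPoly (A - B) (a - b) (α - β) z := by
    simp only [quadPoly, Matrix.sub_apply, Pi.sub_apply, sub_mul, Finset.sum_sub_distrib]
    ring
  simp only [hgrad, hdiff]
  rw [← Real.sqrt_mul zero_le_two]
  exact Real.sqrt_le_sqrt (integral_sum_sq_gradient_quadPoly_le (hA.sub hB) _ _)
end

section
/- Let ℓ_1, ℓ_2 be affine functions on R^2 and let X be a standard normal random vector in R^2. Then sup_{x ∈ R^2} [√(|ℓ_1(x)|² + |ℓ_2(x)|²) e^{−|x|²/4}] ≤ √3 · (E[|ℓ_1(X)|² + |ℓ_2(X)|²])^{1/2}. -/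
/-! For an affine `ℓ(x) = a₁ x₁ + a₂ x₂ + b`, Cauchy–Schwarz gives
`ℓ(x)² ≤ (a₁² + a₂² + b²)(|x|² + 1)`, and `a₁² + a₂² + b² = E[ℓ(X)²]` is the variance of
`a₁ X₁ + a₂ X₂` plus the square of its mean `b`. Since `(|x|² + 1) e^{-|x|²/2} ≤ 2`, the
supremum is even at most `√2 (E[ℓ₁(X)² + ℓ₂(X)²])^{1/2}`. -/

open MeasureTheory ProbabilityTheory Real
open scoped NNReal

lemma integral_sq_eq_variance_add_sq {Ω : Type*} [MeasurableSpace Ω] {μ : Measure Ω}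
    [IsProbabilityMeasure μ] {X : Ω → ℝ} (hX : MemLp X 2 μ) :
    ∫ ω, X ω ^ 2 ∂μ = Var[X; μ] + (∫ ω, X ω ∂μ) ^ 2 := by
  rw [variance_eq_sub hX]
  simp

section
variable {ι : Type*} [Fintype ι] (m : ι → ℝ) (v : ι → ℝ≥0)

lemma memLp_mul_eval_pi_gaussianReal (c : ℝ) (i : ι) (p : ℝ≥0) :
    MemLp (fun y : ι → ℝ => c * y i) p (Measure.pi fun i => gaussianReal (m i) (v i)) :=
  ((memLp_id_gaussianReal p).comp_measurePreserving (measurePreserving_eval _ i)).const_mul c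

lemma memLp_linear_pi_gaussianReal (a : ι → ℝ) (p : ℝ≥0) :
    MemLp (fun y : ι → ℝ => ∑ i, a i * y i) p (Measure.pi fun i => gaussianReal (m i) (v i)) :=
  memLp_finsetSum _ fun i _ => memLp_mul_eval_pi_gaussianReal m v (a i) i p

lemma integral_linear_pi_gaussianReal (a : ι → ℝ) :
    ∫ y : ι → ℝ, ∑ i, a i * y i ∂(Measure.pi fun i => gaussianReal (m i) (v i)) =
      ∑ i, a i * m i := by
  rw [integral_finsetSum _ fun i _ =>
    (memLp_mul_eval_pi_gaussianReal m v (a i) i 1).integrable le_rfl]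
  simp_rw [integral_const_mul, integral_eval, integral_id_gaussianReal]

lemma variance_linear_pi_gaussianReal (a : ι → ℝ) :
    Var[fun y : ι → ℝ => ∑ i, a i * y i; Measure.pi fun i => gaussianReal (m i) (v i)] =
      ∑ i, a i ^ 2 * v i := by
  have hsum := variance_sum_pi (μ := fun i => gaussianReal (m i) (v i)) (X := fun i x => a i * x)
    fun i => (memLp_id_gaussianReal 2).const_mul (a i)
  convert hsum using 1
  · congr 1; ext y; simp [Finset.sum_apply]
  · congr 1; ext i
    rw [variance_const_mul (a i) (fun x => x), variance_fun_id_gaussianReal]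

lemma memLp_affine_pi_gaussianReal (a : ι → ℝ) (b : ℝ) (p : ℝ≥0) :
    MemLp (fun y : ι → ℝ => ∑ i, a i * y i + b) p
      (Measure.pi fun i => gaussianReal (m i) (v i)) :=
  (memLp_linear_pi_gaussianReal m v a p).add (memLp_const b)

lemma integral_sq_affine_pi_gaussianReal (a : ι → ℝ) (b : ℝ) :
    ∫ y : ι → ℝ, (∑ i, a i * y i + b) ^ 2 ∂(Measure.pi fun i => gaussianReal (m i) (v i)) =
      ∑ i, a i ^ 2 * v i + (∑ i, a i * m i + b) ^ 2 := by
  have hL := memLp_linear_pi_gaussianReal m v a 2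
  rw [integral_sq_eq_variance_add_sq (memLp_affine_pi_gaussianReal m v a b 2),
    variance_add_const hL.aestronglyMeasurable, variance_linear_pi_gaussianReal,
    integral_add (hL.integrable one_le_two) (integrable_const b),
    integral_linear_pi_gaussianReal]
  simp

end

lemma sq_mul_add_mul_add_le (a₁ a₂ b x₀ x₁ : ℝ) :
    (a₁ * x₀ + a₂ * x₁ + b) ^ 2 ≤ (a₁ ^ 2 + a₂ ^ 2 + b ^ 2) * (x₀ ^ 2 + x₁ ^ 2 + 1) := by
  nlinarith [sq_nonneg (a₁ * x₁ - a₂ * x₀), sq_nonneg (a₁ - b * x₀), sq_nonneg (a₂ - b * x₁)]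

lemma add_one_mul_exp_neg_half_le_two (r : ℝ) : (r + 1) * exp (-r / 2) ≤ 2 := by
  calc (r + 1) * exp (-r / 2) ≤ 2 * exp (r / 2) * exp (-r / 2) := by
        gcongr; linarith [add_one_le_exp (r / 2)]
    _ = 2 := by rw [mul_assoc, ← exp_add, show r / 2 + -r / 2 = 0 by ring, exp_zero, mul_one]

lemma sqrt_mul_exp_neg_div_four_le {A S r : ℝ} (hS : 0 ≤ S) (h : A ≤ S * (r + 1)) :
    √A * exp (-r / 4) ≤ √(2 * S) := by
  have hexp : exp (-r / 4) = √(exp (-r / 2)) := by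
    rw [← exp_half]; ring_nf
  rw [hexp, ← sqrt_mul' _ (exp_pos _).le]
  apply sqrt_le_sqrt
  calc A * exp (-r / 2) ≤ S * ((r + 1) * exp (-r / 2)) := by
        rw [← mul_assoc]; gcongr
    _ ≤ S * 2 := by gcongr; exact add_one_mul_exp_neg_half_le_two r
    _ = 2 * S := mul_comm _ _

/-- For affine functions `ℓ₁(x) = a₁x₁ + a₂x₂ + b₁`,
`ℓ₂(x) = c₁x₁ + c₂x₂ + b₂` on `ℝ²` and `X` standard normal in `ℝ²`,
`sup_x √(ℓ₁(x)² + ℓ₂(x)²) e^{−|x|²/4} ≤ √3 (E[ℓ₁(X)² + ℓ₂(X)²])^{1/2}`. -/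
theorem sup_affine_pair_bound (a₁ a₂ b₁ c₁ c₂ b₂ : ℝ) :
    ∀ x : Fin 2 → ℝ,
      Real.sqrt ((a₁ * x 0 + a₂ * x 1 + b₁) ^ 2 + (c₁ * x 0 + c₂ * x 1 + b₂) ^ 2)
          * Real.exp (-(x 0 ^ 2 + x 1 ^ 2) / 4)
        ≤ Real.sqrt 3 *
          Real.sqrt (∫ y : Fin 2 → ℝ,
            ((a₁ * y 0 + a₂ * y 1 + b₁) ^ 2 + (c₁ * y 0 + c₂ * y 1 + b₂) ^ 2)
            ∂(Measure.pi fun _ : Fin 2 => gaussianReal 0 1)) := by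
  intro x
  have hmemLp (p q r : ℝ) : MemLp (fun y : Fin 2 → ℝ => p * y 0 + q * y 1 + r) 2
      (Measure.pi fun _ : Fin 2 => gaussianReal 0 1) := by
    simpa using memLp_affine_pi_gaussianReal 0 1 ![p, q] r 2
  have hmoment (p q r : ℝ) : ∫ y : Fin 2 → ℝ, (p * y 0 + q * y 1 + r) ^ 2
      ∂(Measure.pi fun _ : Fin 2 => gaussianReal 0 1) = p ^ 2 + q ^ 2 + r ^ 2 := by
    simpa using integral_sq_affine_pi_gaussianReal 0 1 ![p, q] r
  rw [integral_add (hmemLp a₁ a₂ b₁).integrable_sq (hmemLp c₁ c₂ b₂).integrable_sq,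
    hmoment, hmoment]
  calc _ ≤ √(2 * (a₁ ^ 2 + a₂ ^ 2 + b₁ ^ 2 + (c₁ ^ 2 + c₂ ^ 2 + b₂ ^ 2))) :=
        sqrt_mul_exp_neg_div_four_le (by positivity) (by
          nlinarith [sq_mul_add_mul_add_le a₁ a₂ b₁ (x 0) (x 1),
            sq_mul_add_mul_add_le c₁ c₂ b₂ (x 0) (x 1)])
    _ ≤ √(3 * (a₁ ^ 2 + a₂ ^ 2 + b₁ ^ 2 + (c₁ ^ 2 + c₂ ^ 2 + b₂ ^ 2))) := by gcongr; norm_num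
    _ = _ := sqrt_mul (by norm_num) _
end

section
/- If G(x) = a_{11} x_1² + 2 a_{12} x_1 x_2 + a_{22} x_2² + b_1 x_1 + b_2 x_2 + c and X is a standard normal random vector in R^2, then E[|G(X)|²] ≥ (1/3)(a_{11}² + a_{12}² + a_{22}² + b_1² + b_2² + c²). -/
open MeasureTheory ProbabilityTheory Real Set NNReal ENNReal

section Aux

lemma integrable_pow_mul_exp' (n : ℕ) :
    Integrable (fun x : ℝ => x ^ n * rexp (-(1/2) * x ^ 2)) := by
  have := integrable_rpow_mul_exp_neg_mul_sq (b := 1/2) (by norm_num)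
    (s := (n : ℝ)) (lt_of_lt_of_le neg_one_lt_zero (Nat.cast_nonneg n))
  simpa [Real.rpow_natCast] using this

lemma gaussianPDFReal_eq' (x : ℝ) :
    gaussianPDFReal 0 1 x = (√(2 * π))⁻¹ * rexp (-(1/2) * x ^ 2) := by
  simp only [gaussianPDFReal, NNReal.coe_one, mul_one, sub_zero]
  rw [show -x^2/(2:ℝ) = -(1/2)*x^2 by ring]

lemma integrable_pow_gauss' (n : ℕ) :
    Integrable (fun x : ℝ => x ^ n) (gaussianReal 0 1) := by
  rw [gaussianReal_of_var_ne_zero 0 one_ne_zero]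
  have h : (gaussianPDF 0 1) = fun x => ((Real.toNNReal (gaussianPDFReal 0 1 x) : ℝ≥0) : ℝ≥0∞) := by
    funext x; rfl
  rw [h, integrable_withDensity_iff_integrable_smul
    ((measurable_gaussianPDFReal 0 1).real_toNNReal)]
  have h2 : (fun x : ℝ => Real.toNNReal (gaussianPDFReal 0 1 x) • x ^ n)
      = fun x : ℝ => (√(2 * π))⁻¹ * (x ^ n * rexp (-(1/2) * x ^ 2)) := by
    funext x
    rw [NNReal.smul_def, Real.coe_toNNReal _ (gaussianPDFReal_nonneg 0 1 x),
      gaussianPDFReal_eq', smul_eq_mul]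
    ring
  rw [h2]
  exact (integrable_pow_mul_exp' n).const_mul _

lemma gauss_moment_eq' (n : ℕ) :
    ∫ x, x ^ n ∂(gaussianReal 0 1)
      = (√(2 * π))⁻¹ * ∫ x : ℝ, x ^ n * rexp (-(1/2) * x ^ 2) := by
  rw [gaussianReal_of_var_ne_zero 0 one_ne_zero]
  have h : (gaussianPDF 0 1) = fun x => ((Real.toNNReal (gaussianPDFReal 0 1 x) : ℝ≥0) : ℝ≥0∞) := by
    funext x; rfl
  rw [h, integral_withDensity_eq_integral_smul
    ((measurable_gaussianPDFReal 0 1).real_toNNReal) (fun x => x ^ n)]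
  rw [← integral_const_mul]
  congr 1
  funext x
  rw [NNReal.smul_def, Real.coe_toNNReal _ (gaussianPDFReal_nonneg 0 1 x),
    gaussianPDFReal_eq', smul_eq_mul]
  ring

lemma I_odd' (n : ℕ) (hn : Odd n) :
    ∫ x : ℝ, x ^ n * rexp (-(1/2) * x ^ 2) = 0 := by
  have h := integral_neg_eq_self (fun x : ℝ => x ^ n * rexp (-(1/2) * x ^ 2)) volume
  simp only [hn.neg_pow, neg_sq] at h
  have h3 : ∫ (x:ℝ), -x ^ n * rexp (-(1/2) * x ^ 2)
      = -∫ (x:ℝ), x ^ n * rexp (-(1/2) * x ^ 2) := by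
    rw [← integral_neg]; congr 1; funext x; ring
  rw [h3] at h
  linarith

lemma I_even_aux' (n : ℕ) (hn : Even n) :
    ∫ x : ℝ, x ^ n * rexp (-(1/2) * x ^ 2)
      = 2 * ((1/2 : ℝ) ^ (-((n : ℝ) + 1)/2) * (1/2) * Gamma (((n : ℝ) + 1)/2)) := by
  have h : ∫ x : ℝ, x ^ n * rexp (-(1/2) * x ^ 2)
      = ∫ x : ℝ, |x| ^ n * rexp (-(1/2) * |x| ^ 2) := by
    congr 1; funext x; rw [hn.pow_abs, sq_abs]
  rw [h, integral_comp_abs (f := fun t => t ^ n * rexp (-(1/2) * t ^ 2))]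
  rw [show ∫ x in Ioi (0:ℝ), x ^ n * rexp (-(1/2) * x ^ 2)
      = ∫ x in Ioi (0:ℝ), x ^ (n : ℝ) * rexp (-(1/2) * x ^ (2:ℝ)) by
    congr 1; funext x
    rw [Real.rpow_natCast, show (2:ℝ) = ((2:ℕ):ℝ) by norm_num, Real.rpow_natCast]]
  rw [integral_rpow_mul_exp_neg_mul_rpow (by norm_num)
    (lt_of_lt_of_le neg_one_lt_zero (Nat.cast_nonneg n)) (by norm_num)]

lemma I_two' : ∫ x : ℝ, x ^ 2 * rexp (-(1/2) * x ^ 2) = √(2 * π) := by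
  rw [I_even_aux' 2 (Nat.even_iff.mpr rfl)]
  have h1 : ((1:ℝ)/2) ^ (-(((2:ℕ):ℝ) + 1)/2) = 2 ^ ((3:ℝ)/2) := by
    rw [one_div, Real.inv_rpow (by norm_num), ← Real.rpow_neg (by norm_num)]
    norm_num
  have h2 : (2:ℝ) ^ ((3:ℝ)/2) = 2 * √2 := by
    rw [show (3:ℝ)/2 = 1 + 1/2 by norm_num, Real.rpow_add (by norm_num), Real.rpow_one,
      ← Real.sqrt_eq_rpow]
  have h3 : Gamma ((((2:ℕ):ℝ) + 1)/2) = (1/2) * √π := by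
    rw [show (((2:ℕ):ℝ) + 1)/2 = 1/2 + 1 by norm_num, Real.Gamma_add_one (by norm_num),
      Real.Gamma_one_half_eq]
  rw [h1, h2, h3, Real.sqrt_mul (by norm_num)]
  ring

lemma I_four' : ∫ x : ℝ, x ^ 4 * rexp (-(1/2) * x ^ 2) = 3 * √(2 * π) := by
  rw [I_even_aux' 4 (Nat.even_iff.mpr rfl)]
  have h1 : ((1:ℝ)/2) ^ (-(((4:ℕ):ℝ) + 1)/2) = 2 ^ ((5:ℝ)/2) := by
    rw [one_div, Real.inv_rpow (by norm_num), ← Real.rpow_neg (by norm_num)]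
    norm_num
  have h2 : (2:ℝ) ^ ((5:ℝ)/2) = 4 * √2 := by
    rw [show (5:ℝ)/2 = 2 + 1/2 by norm_num, Real.rpow_add (by norm_num), ← Real.sqrt_eq_rpow,
      show (2:ℝ) ^ (2:ℝ) = 4 by
        rw [show (2:ℝ) = ((2:ℕ):ℝ) by norm_num, Real.rpow_natCast]; norm_num]
  have h3 : Gamma ((((4:ℕ):ℝ) + 1)/2) = (3/4) * √π := by
    rw [show (((4:ℕ):ℝ) + 1)/2 = 3/2 + 1 by norm_num, Real.Gamma_add_one (by norm_num),
      show (3:ℝ)/2 = 1/2 + 1 by norm_num, Real.Gamma_add_one (by norm_num),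
      Real.Gamma_one_half_eq]
    ring
  rw [h1, h2, h3, Real.sqrt_mul (by norm_num)]
  ring

lemma sqrt_two_pi_pos' : (0:ℝ) < √(2 * π) := Real.sqrt_pos.mpr (by positivity)

lemma gM0' : ∫ x, x ^ 0 ∂(gaussianReal 0 1) = 1 := by
  simp

lemma gM1' : ∫ x, x ^ 1 ∂(gaussianReal 0 1) = 0 := by
  rw [gauss_moment_eq', I_odd' 1 odd_one]; ring

lemma gM2' : ∫ x, x ^ 2 ∂(gaussianReal 0 1) = 1 := by
  rw [gauss_moment_eq', I_two', inv_mul_cancel₀ (ne_of_gt sqrt_two_pi_pos')]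

lemma gM3' : ∫ x, x ^ 3 ∂(gaussianReal 0 1) = 0 := by
  rw [gauss_moment_eq', I_odd' 3 ⟨1, by norm_num⟩]; ring

lemma gM4' : ∫ x, x ^ 4 ∂(gaussianReal 0 1) = 3 := by
  rw [gauss_moment_eq', I_four']
  field_simp

lemma integrable_poly' (c0 c1 c2 c3 c4 : ℝ) :
    Integrable (fun x : ℝ => c4*x^4 + c3*x^3 + c2*x^2 + c1*x^1 + c0*x^0) (gaussianReal 0 1) :=
  (((((integrable_pow_gauss' 4).const_mul c4).add
    ((integrable_pow_gauss' 3).const_mul c3)).add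
    ((integrable_pow_gauss' 2).const_mul c2)).add
    ((integrable_pow_gauss' 1).const_mul c1)).add
    ((integrable_pow_gauss' 0).const_mul c0)

lemma integral_poly' (c0 c1 c2 c3 c4 : ℝ) :
    ∫ x, (c4*x^4 + c3*x^3 + c2*x^2 + c1*x^1 + c0*x^0) ∂(gaussianReal 0 1)
      = 3*c4 + c2 + c0 := by
  have h1 : Integrable (fun x : ℝ => c4*x^4) (gaussianReal 0 1) :=
    (integrable_pow_gauss' 4).const_mul c4
  have h2 : Integrable (fun x : ℝ => c3*x^3) (gaussianReal 0 1) :=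
    (integrable_pow_gauss' 3).const_mul c3
  have h3 : Integrable (fun x : ℝ => c2*x^2) (gaussianReal 0 1) :=
    (integrable_pow_gauss' 2).const_mul c2
  have h4 : Integrable (fun x : ℝ => c1*x^1) (gaussianReal 0 1) :=
    (integrable_pow_gauss' 1).const_mul c1
  have h5 : Integrable (fun x : ℝ => c0*x^0) (gaussianReal 0 1) :=
    (integrable_pow_gauss' 0).const_mul c0
  have h12 : Integrable (fun x : ℝ => c4*x^4 + c3*x^3) (gaussianReal 0 1) := h1.add h2
  have h123 : Integrable (fun x : ℝ => c4*x^4 + c3*x^3 + c2*x^2) (gaussianReal 0 1) := h12.add h3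
  have h1234 : Integrable (fun x : ℝ => c4*x^4 + c3*x^3 + c2*x^2 + c1*x^1) (gaussianReal 0 1) :=
    h123.add h4
  rw [integral_add h1234 h5, integral_add h123 h4, integral_add h12 h3, integral_add h1 h2,
    integral_const_mul, integral_const_mul, integral_const_mul, integral_const_mul,
    integral_const_mul, gM0', gM1', gM2', gM3', gM4']
  ring

lemma integrable_quad_sq' (u v w : ℝ) :
    Integrable (fun x : ℝ => (u*x^2 + v*x + w)^2) (gaussianReal 0 1) := by
  have h : (fun x : ℝ => (u*x^2 + v*x + w)^2)
      = fun x : ℝ => u^2*x^4 + (2*u*v)*x^3 + (v^2+2*u*w)*x^2 + (2*v*w)*x^1 + w^2*x^0 := by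
    funext x; ring
  rw [h]; exact integrable_poly' _ _ _ _ _

lemma integral_quad_sq' (u v w : ℝ) :
    ∫ x, (u*x^2 + v*x + w)^2 ∂(gaussianReal 0 1) = 3*u^2 + v^2 + w^2 + 2*u*w := by
  have h : (fun x : ℝ => (u*x^2 + v*x + w)^2)
      = fun x : ℝ => u^2*x^4 + (2*u*v)*x^3 + (v^2+2*u*w)*x^2 + (2*v*w)*x^1 + w^2*x^0 := by
    funext x; ring
  rw [h, integral_poly']
  ring

end Aux

/-- For `G(x) = a₁₁x₁² + 2a₁₂x₁x₂ + a₂₂x₂² + b₁x₁ + b₂x₂ + c`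
and `X` standard normal in `ℝ²`,
`E[G(X)²] ≥ (1/3)(a₁₁² + a₁₂² + a₂₂² + b₁² + b₂² + c²)`. -/
theorem second_moment_quadratic_lower_bound (a₁₁ a₁₂ a₂₂ b₁ b₂ c : ℝ) :
    (∫ y : Fin 2 → ℝ,
        (a₁₁ * y 0 ^ 2 + 2 * a₁₂ * y 0 * y 1 + a₂₂ * y 1 ^ 2
          + b₁ * y 0 + b₂ * y 1 + c) ^ 2
        ∂(Measure.pi fun _ : Fin 2 => gaussianReal 0 1))
      ≥ (1 / 3) * (a₁₁ ^ 2 + a₁₂ ^ 2 + a₂₂ ^ 2 + b₁ ^ 2 + b₂ ^ 2 + c ^ 2) := by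
  have key : (∫ y : Fin 2 → ℝ,
        (a₁₁ * y 0 ^ 2 + 2 * a₁₂ * y 0 * y 1 + a₂₂ * y 1 ^ 2
          + b₁ * y 0 + b₂ * y 1 + c) ^ 2
        ∂(Measure.pi fun _ : Fin 2 => (gaussianReal 0 1)))
      = ∫ p : ℝ × ℝ,
        (a₁₁ * p.1 ^ 2 + 2 * a₁₂ * p.1 * p.2 + a₂₂ * p.2 ^ 2
          + b₁ * p.1 + b₂ * p.2 + c) ^ 2 ∂((gaussianReal 0 1).prod (gaussianReal 0 1)) := by
    rw [← (measurePreserving_finTwoArrow (gaussianReal 0 1)).integral_comp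
      (MeasurableEquiv.finTwoArrow).measurableEmbedding
      (fun p : ℝ × ℝ => (a₁₁ * p.1 ^ 2 + 2 * a₁₂ * p.1 * p.2 + a₂₂ * p.2 ^ 2
          + b₁ * p.1 + b₂ * p.2 + c) ^ 2)]
    rfl
  have hInt : Integrable (fun p : ℝ × ℝ =>
      (a₁₁ * p.1 ^ 2 + 2 * a₁₂ * p.1 * p.2 + a₂₂ * p.2 ^ 2
        + b₁ * p.1 + b₂ * p.2 + c) ^ 2) ((gaussianReal 0 1).prod (gaussianReal 0 1)) := by
    have h : (fun p : ℝ × ℝ =>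
        (a₁₁ * p.1 ^ 2 + 2 * a₁₂ * p.1 * p.2 + a₂₂ * p.2 ^ 2
          + b₁ * p.1 + b₂ * p.2 + c) ^ 2)
        = fun p : ℝ × ℝ =>
          ((a₁₁^2*p.1^4 + (2*a₁₁*b₁)*p.1^3 + (b₁^2+2*a₁₁*c)*p.1^2 + (2*b₁*c)*p.1^1 + c^2*p.1^0) * p.2^0)
          + ((0*p.1^4 + (4*a₁₁*a₁₂)*p.1^3 + (2*a₁₁*b₂+4*a₁₂*b₁)*p.1^2 + (2*b₁*b₂+4*a₁₂*c)*p.1^1 + (2*b₂*c)*p.1^0) * p.2^1)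
          + ((0*p.1^4 + 0*p.1^3 + (4*a₁₂^2+2*a₂₂*a₁₁)*p.1^2 + (4*a₁₂*b₂+2*a₂₂*b₁)*p.1^1 + (b₂^2+2*a₂₂*c)*p.1^0) * p.2^2)
          + ((0*p.1^4 + 0*p.1^3 + 0*p.1^2 + (4*a₂₂*a₁₂)*p.1^1 + (2*a₂₂*b₂)*p.1^0) * p.2^3)
          + ((0*p.1^4 + 0*p.1^3 + 0*p.1^2 + 0*p.1^1 + a₂₂^2*p.1^0) * p.2^4) := by
      funext p; ring
    rw [h]
    exact (((((integrable_poly' _ _ _ _ _).mul_prod (integrable_pow_gauss' 0)).add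
      ((integrable_poly' _ _ _ _ _).mul_prod (integrable_pow_gauss' 1))).add
      ((integrable_poly' _ _ _ _ _).mul_prod (integrable_pow_gauss' 2))).add
      ((integrable_poly' _ _ _ _ _).mul_prod (integrable_pow_gauss' 3))).add
      ((integrable_poly' _ _ _ _ _).mul_prod (integrable_pow_gauss' 4))
  rw [key, integral_prod _ hInt]
  have inner : ∀ x : ℝ, (∫ y : ℝ,
      (a₁₁ * x ^ 2 + 2 * a₁₂ * x * y + a₂₂ * y ^ 2 + b₁ * x + b₂ * y + c) ^ 2 ∂(gaussianReal 0 1))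
      = (a₁₁*x^2 + b₁*x + c)^2
        + ((4*a₁₂^2+2*a₂₂*a₁₁)*x^2 + (4*a₁₂*b₂+2*a₂₂*b₁)*x + (3*a₂₂^2 + b₂^2 + 2*a₂₂*c)) := by
    intro x
    have h : (fun y : ℝ =>
        (a₁₁ * x ^ 2 + 2 * a₁₂ * x * y + a₂₂ * y ^ 2 + b₁ * x + b₂ * y + c) ^ 2)
        = fun y : ℝ => (a₂₂*y^2 + (2*a₁₂*x+b₂)*y + (a₁₁*x^2+b₁*x+c))^2 := by
      funext y; ring
    rw [h, integral_quad_sq']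
    ring
  simp_rw [inner]
  have hg : Integrable (fun x : ℝ => (4*a₁₂^2+2*a₂₂*a₁₁)*x^2 + (4*a₁₂*b₂+2*a₂₂*b₁)*x + (3*a₂₂^2 + b₂^2 + 2*a₂₂*c)) (gaussianReal 0 1) := by
    have h : (fun x : ℝ => (4*a₁₂^2+2*a₂₂*a₁₁)*x^2 + (4*a₁₂*b₂+2*a₂₂*b₁)*x + (3*a₂₂^2 + b₂^2 + 2*a₂₂*c))
        = fun x : ℝ => 0*x^4 + 0*x^3 + (4*a₁₂^2+2*a₂₂*a₁₁)*x^2 + (4*a₁₂*b₂+2*a₂₂*b₁)*x^1 + (3*a₂₂^2 + b₂^2 + 2*a₂₂*c)*x^0 := by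
      funext x; ring
    rw [h]; exact integrable_poly' _ _ _ _ _
  rw [integral_add (integrable_quad_sq' _ _ _) hg, integral_quad_sq']
  have h2 : (∫ x : ℝ, ((4*a₁₂^2+2*a₂₂*a₁₁)*x^2 + (4*a₁₂*b₂+2*a₂₂*b₁)*x + (3*a₂₂^2 + b₂^2 + 2*a₂₂*c)) ∂(gaussianReal 0 1))
      = (4*a₁₂^2+2*a₂₂*a₁₁) + (3*a₂₂^2 + b₂^2 + 2*a₂₂*c) := by
    have h : (fun x : ℝ => (4*a₁₂^2+2*a₂₂*a₁₁)*x^2 + (4*a₁₂*b₂+2*a₂₂*b₁)*x + (3*a₂₂^2 + b₂^2 + 2*a₂₂*c))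
        = fun x : ℝ => 0*x^4 + 0*x^3 + (4*a₁₂^2+2*a₂₂*a₁₁)*x^2 + (4*a₁₂*b₂+2*a₂₂*b₁)*x^1 + (3*a₂₂^2 + b₂^2 + 2*a₂₂*c)*x^0 := by
      funext x; ring
    rw [h, integral_poly']
    ring
  rw [h2]
  nlinarith [sq_nonneg (a₁₁ + a₂₂ + c), sq_nonneg a₁₁, sq_nonneg a₂₂, sq_nonneg a₁₂,
    sq_nonneg b₁, sq_nonneg b₂, sq_nonneg (a₁₁ - a₂₂), sq_nonneg (a₁₁ + a₂₂),
    sq_nonneg (a₁₁ + c), sq_nonneg (a₂₂ + c)]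
end
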